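/- Suppose S is a stationary subset of C and {σ_ξ : ξ ∈ S} is a level sequence in T^{[n]} with every σ_ξ ∈ K^{[n]}_φ. Then there exist distinct ξ, η ∈ S with σ_ξ ∧ σ_η ∈ K^{[n]}. -/

import Mathlib

noncomputable section

namespace Basis5

/-- The first uncountable ordinal. -/
def omega1 : Ordinal.{0} := (Cardinal.aleph 1).ord

/-- A node of the binary tree `2^{<ω₁}`: a function defined (i.e. `some`-valued)
exactly on a countable ordinal. -/
def IsNodeFun (f : Ordinal.{0} → Option Bool) : Prop :=
  ∃ a, a < omega1 ∧ ∀ ξ, (f ξ).isSome ↔ ξ < a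

def BNode := {f : Ordinal → Option Bool // IsNodeFun f}

/-- The height (domain) of a node. -/
def ht (t : BNode) : Ordinal := sInf {a | ∀ ξ, (t.1 ξ).isSome ↔ ξ < a}

/-- Restriction of a node to (at most) height `α`. -/
def restrict (t : BNode) (α : Ordinal) : BNode :=
  ⟨fun ξ => if ξ < α then t.1 ξ else none, by
    obtain ⟨a, ha, hfa⟩ := t.2
    refine ⟨min α a, lt_of_le_of_lt (min_le_right _ _) ha, fun ξ => ?_⟩
    by_cases h : ξ < α
    · simp [h, hfa ξ, lt_min_iff]
    · simp [h, lt_min_iff]⟩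

/-- `s` is an initial segment of `t` (the tree order of `2^{<ω₁}`). -/
def extends' (s t : BNode) : Prop := restrict t (ht s) = s

/-- `s` and `t` are incomparable in the tree order. -/
def Incomp (s t : BNode) : Prop := ¬ extends' s t ∧ ¬ extends' t s

/-- `D(s,t)`, the set of coordinates where `s` and `t` differ. -/
def diffSet (s t : BNode) : Set Ordinal := {ξ | s.1 ξ ≠ t.1 ξ}

/-- `Δ(s,t) = min D(s,t)`. -/
def delta (s t : BNode) : Ordinal := sInf (diffSet s t)

/-- The meet `s ∧ t = s ↾ Δ(s,t)`. -/
def meet (s t : BNode) : BNode := restrict s (delta s t)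

/-- Lexicographic (non-strict) order on nodes of the same height. -/
def lexLE (s t : BNode) : Prop := s = t ∨ t.1 (delta s t) = some true

/-- `∧(X)`: the set of pairwise meets of incomparable elements of `X`. -/
def wedgeSet (X : Set BNode) : Set BNode :=
  {w | ∃ s ∈ X, ∃ t ∈ X, Incomp s t ∧ w = meet s t}

def DownClosed (A : Set BNode) : Prop := ∀ t ∈ A, ∀ α, restrict t α ∈ A

def IsAntichainN (X : Set BNode) : Prop := ∀ s ∈ X, ∀ t ∈ X, s ≠ t → Incomp s t

/-- An Aronszajn tree: uncountable, downward closed, countable levels and chains. -/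
def IsAronszajn (T : Set BNode) : Prop :=
  DownClosed T ∧ ¬ T.Countable ∧ (∀ α, {t : BNode | t ∈ T ∧ ht t = α}.Countable) ∧
    ∀ c : Set BNode, c ⊆ T → (∀ s ∈ c, ∀ t ∈ c, extends' s t ∨ extends' t s) → c.Countable

/-- A subtree: an uncountable downward closed subset. -/
def IsSubtree (T A : Set BNode) : Prop := A ⊆ T ∧ DownClosed A ∧ ¬ A.Countable

def Coherent (T : Set BNode) : Prop :=
  ∀ s ∈ T, ∀ t ∈ T, ht s = ht t → (diffSet s t).Finite

def IsSpecial (T : Set BNode) : Prop :=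
  ∃ f : BNode → ℕ, ∀ s ∈ T, ∀ t ∈ T, extends' s t → s ≠ t → f s ≠ f t

def FinModClosed (T : Set BNode) : Prop :=
  ∀ t ∈ T, ∀ s : BNode, ht s = ht t → (diffSet s t).Finite → s ∈ T

/-- Club subsets of `ω₁`. -/
def IsClubBelow (C : Set Ordinal) : Prop :=
  C ⊆ Set.Iio omega1 ∧ (∀ a < omega1, ∃ b ∈ C, a < b) ∧
    ∀ a < omega1, (C ∩ Set.Iio a).Nonempty → sSup (C ∩ Set.Iio a) = a → a ∈ C

/-- Stationary subsets of `ω₁`. -/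
def IsStationary (S : Set Ordinal) : Prop :=
  S ⊆ Set.Iio omega1 ∧ ∀ C, IsClubBelow C → (S ∩ C).Nonempty

/-- `a` is a limit point of `C`. -/
def IsLimitOf (C : Set Ordinal) (a : Ordinal) : Prop :=
  (C ∩ Set.Iio a).Nonempty ∧ sSup (C ∩ Set.Iio a) = a

/-- Membership in `T^{[n]}`: an `≤_lex`-nondecreasing `n`-tuple from a single level of `T`. -/
def IsTup (T : Set BNode) (n : ℕ) (σ : Fin n → BNode) : Prop :=
  (∀ i, σ i ∈ T) ∧ (∀ i j, ht (σ i) = ht (σ j)) ∧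
    ∀ i j : Fin n, i ≤ j → lexLE (σ i) (σ j)

/-- Coordinatewise restriction of a tuple. -/
def tres {n : ℕ} (σ : Fin n → BNode) (α : Ordinal) : Fin n → BNode :=
  fun i => restrict (σ i) α

def tExt {n : ℕ} (σ τ : Fin n → BNode) : Prop := ∀ i, extends' (σ i) (τ i)

def tIncomp {n : ℕ} (σ τ : Fin n → BNode) : Prop := ¬ tExt σ τ ∧ ¬ tExt τ σ

def tdiff {n : ℕ} (σ τ : Fin n → BNode) : Set Ordinal :=
  {ξ | ∃ i, (σ i).1 ξ ≠ (τ i).1 ξ}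

/-- `Δ(σ,τ)` for tuples: least level where some coordinate differs. -/
def tdelta {n : ℕ} (σ τ : Fin n → BNode) : Ordinal := sInf (tdiff σ τ)

def tmeet {n : ℕ} (σ τ : Fin n → BNode) : Fin n → BNode := tres σ (tdelta σ τ)

def twedge {n : ℕ} (X : Set (Fin n → BNode)) : Set (Fin n → BNode) :=
  {w | ∃ σ ∈ X, ∃ τ ∈ X, tIncomp σ τ ∧ w = tmeet σ τ}

def tAntichain {n : ℕ} (X : Set (Fin n → BNode)) : Prop :=
  ∀ σ ∈ X, ∀ τ ∈ X, σ ≠ τ → tIncomp σ τ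

/-- `σ ∈ K^{[n]} = K^n ∩ T^{[n]}`. -/
def KTup (T K : Set BNode) (n : ℕ) (σ : Fin n → BNode) : Prop :=
  IsTup T n σ ∧ ∀ i, σ i ∈ K

/-- The pair `{σ, τ}` (with `Ht σ ≤ Ht τ`) is regular:
`D(τ(i), τ(0)) ∩ Ht(σ) = D(σ(i), σ(0))` for all `i < n`. -/
def RegPair (n : ℕ) (σ τ : Fin n → BNode) : Prop :=
  ∀ (h : 0 < n) (i : Fin n),
    diffSet (τ i) (τ ⟨0, h⟩) ∩ Set.Iio (ht (σ ⟨0, h⟩)) = diffSet (σ i) (σ ⟨0, h⟩)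

/-- A set of tuples is regular if every pair of its elements is regular. -/
def RegSet {n : ℕ} (X : Set (Fin n → BNode)) : Prop :=
  ∀ σ ∈ X, ∀ τ ∈ X, (∀ i, ht (σ i) ≤ ht (τ i)) → RegPair n σ τ

/-- A subtree of `T^{[n]}`: uncountable set of tuples closed under restriction. -/
def IsTupSubtree (T : Set BNode) (n : ℕ) (R : Set (Fin n → BNode)) : Prop :=
  (∀ σ ∈ R, IsTup T n σ) ∧ (∀ σ ∈ R, ∀ α, tres σ α ∈ R) ∧ ¬ R.Countable

/-- The family `F_n` of regular subtrees of `T^{[n]}` whose meets avoid `K^{[n]}`. -/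
def Fn (T K : Set BNode) (n : ℕ) : Set (Set (Fin n → BNode)) :=
  {R | IsTupSubtree T n R ∧ RegSet R ∧ ∀ w ∈ twedge R, ¬ KTup T K n w}

/-- `F_n^⊥`: subtrees of `T^{[n]}` orthogonal to every member of `F_n`. -/
def FnPerp (T K : Set BNode) (n : ℕ) : Set (Set (Fin n → BNode)) :=
  {B | IsTupSubtree T n B ∧ ∀ A ∈ Fn T K n, (A ∩ B).Countable}

/-- `⟨N_ξ : ξ ∈ C⟩` witnesses `φ₀(F_n)`. -/
def Phi0Witness (T K : Set BNode) (n : ℕ) (C : Set Ordinal)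
    (N : Ordinal → Set (Set (Fin n → BNode))) : Prop :=
  IsClubBelow C ∧
  (∀ ξ ∈ C, (N ξ).Countable ∧ N ξ ⊆ Fn T K n ∪ FnPerp T K n) ∧
  (∀ ξ ∈ C, ∀ η ∈ C, ξ ≤ η → N ξ ⊆ N η) ∧
  (∀ ν ∈ C, IsLimitOf C ν → N ν = ⋃ ξ ∈ C ∩ Set.Iio ν, N ξ) ∧
  (∀ ν ∈ C, ∀ σ : Fin n → BNode, IsTup T n σ → (∀ i, ht (σ i) = ν) →
    (∃ ν₀ < ν, ∀ ξ ∈ C, ν₀ < ξ → ξ < ν → ∃ A ∈ Fn T K n, A ∈ N ξ ∧ tres σ ξ ∈ A) ∨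
    (∃ B ∈ FnPerp T K n, B ∈ N ν ∧ σ ∈ B))

/-- The coloring `K^{[n]}_φ`. -/
def KPhi (T K : Set BNode) (n : ℕ) (C : Set Ordinal)
    (N : Ordinal → Set (Set (Fin n → BNode))) : Set (Fin n → BNode) :=
  {σ | IsTup T n σ ∧ ∃ ν ∈ C, (∀ i, ht (σ i) = ν) ∧
    ∃ B ∈ FnPerp T K n, B ∈ N ν ∧ σ ∈ B}

/-- The coloring `L^{[n]}_φ = (T^{[n]} ↾ C) \ K^{[n]}_φ`. -/
def LPhi (T K : Set BNode) (n : ℕ) (C : Set Ordinal)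
    (N : Ordinal → Set (Set (Fin n → BNode))) : Set (Fin n → BNode) :=
  {σ | IsTup T n σ ∧ (∃ ν ∈ C, ∀ i, ht (σ i) = ν) ∧ σ ∉ KPhi T K n C N}

/-- `ρ` is the `≤_lex`-sorted merge `σ ∪ τ` of the tuples `σ` and `τ`. -/
def IsMerge {n m : ℕ} (σ : Fin n → BNode) (τ : Fin m → BNode)
    (ρ : Fin (n + m) → BNode) : Prop :=
  (∀ i j : Fin (n + m), i ≤ j → lexLE (ρ i) (ρ j)) ∧
  (↑(List.ofFn ρ) : Multiset BNode) = ↑(List.ofFn σ) + ↑(List.ofFn τ)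

/-- `σ` is a subsequence of `τ`. -/
def IsSubseq {m n : ℕ} (σ : Fin m → BNode) (τ : Fin n → BNode) : Prop :=
  ∃ ι : Fin m → Fin n, StrictMono ι ∧ σ = τ ∘ ι

/-- A level sequence `{σ_α : α ∈ S}` in `T^{[n]}`. -/
def LevelSeq (T : Set BNode) (n : ℕ) (S : Set Ordinal)
    (σ : Ordinal → Fin n → BNode) : Prop :=
  ∀ α ∈ S, IsTup T n (σ α) ∧ ∀ i, ht (σ α i) = α

/-- The level sequence `{σ_α : α ∈ S}` is regular. -/
def RegSeq {n : ℕ} (S : Set Ordinal) (σ : Ordinal → Fin n → BNode) : Prop :=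
  ∀ α ∈ S, ∀ β ∈ S, α ≤ β → RegPair n (σ α) (σ β)

/-- The tree `R_X` generated by `X` (downward closure). -/
def downClosure (X : Set BNode) : Set BNode :=
  {r | ∃ t ∈ X, ∃ ξ ≤ ht t, r = restrict t ξ}

/-- The tree generated by a set of tuples. -/
def tDownClosure {n : ℕ} (X : Set (Fin n → BNode)) : Set (Fin n → BNode) :=
  {ρ | ∃ σ ∈ X, ∃ ξ, (∀ i, ξ ≤ ht (σ i)) ∧ ρ = tres σ ξ}

end Basis5
namespace Basis5

/-- Martin's Axiom `MA_{ℵ₁}`: every nonempty ccc partial preorder admits a filter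
meeting any `ℵ₁`-many dense sets. -/
def CCCPre (P : Type 1) (le : P → P → Prop) : Prop :=
  ∀ A : Set P, (∀ p ∈ A, ∀ q ∈ A, p ≠ q → ¬ ∃ r, le r p ∧ le r q) → A.Countable

def MAaleph1 : Prop :=
  ∀ (P : Type 1) (le : P → P → Prop), (∀ p, le p p) →
    (∀ p q r, le p q → le q r → le p r) → Nonempty P → CCCPre P le →
    ∀ (ι : Type 1) (D : ι → Set P), Cardinal.mk ι ≤ Cardinal.aleph 1 →
      (∀ i, ∀ p, ∃ q ∈ D i, le q p) →
      ∃ G : Set P, G.Nonempty ∧ (∀ p ∈ G, ∀ q, le p q → q ∈ G) ∧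
        (∀ p ∈ G, ∀ q ∈ G, ∃ r ∈ G, le r p ∧ le r q) ∧ ∀ i, (G ∩ D i).Nonempty

/-- `π(X) = X`. -/
def piClosed (X : Set BNode) : Prop :=
  ∀ s ∈ X, ∀ t ∈ X, ht s ≤ ht t → restrict t (ht s) ∈ X

/-- Every level-section of `X`, enumerated in `≤_lex`-increasing order, lies in `K_φ`. -/
def SectionsInKPhi (T K : Set BNode) (C : Set Ordinal)
    (N : (k : ℕ) → Ordinal → Set (Set (Fin k → BNode))) (X : Set BNode) : Prop :=
  ∀ α : Ordinal, {x ∈ X | ht x = α}.Nonempty →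
    ∃ (k : ℕ) (ρ : Fin k → BNode), Function.Injective ρ ∧
      (∀ i j : Fin k, i ≤ j → lexLE (ρ i) (ρ j)) ∧
      Set.range ρ = {x ∈ X | ht x = α} ∧ ρ ∈ KPhi T K k C (N k)

/-- All finite same-height `≤_lex`-sorted tuples from `X` lie in `K_φ`. -/
def FinLevelSubsetsInKPhi (T K : Set BNode) (C : Set Ordinal)
    (N : (k : ℕ) → Ordinal → Set (Set (Fin k → BNode))) (X : Set BNode) : Prop :=
  ∀ (k : ℕ) (ρ : Fin k → BNode), Function.Injective ρ → (∀ i, ρ i ∈ X) →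
    (∀ i j, ht (ρ i) = ht (ρ j)) → (∀ i j : Fin k, i ≤ j → lexLE (ρ i) (ρ j)) →
    ρ ∈ KPhi T K k C (N k)

section Forcing

variable {EM : Type 1}

/-- A condition of the forcing `∂*(K)`: a pair `(X_p, 𝓜_p)`.  Here `EM` is an abstract
type of (countable elementary submodels of `H(ω₂)`), `mem` its `∈`-relation,
`δe M = M ∩ ω₁`, and `E` the club `𝓔` of such models. -/
def IsCond (T K : Set BNode) (C : Set Ordinal)
    (N : (k : ℕ) → Ordinal → Set (Set (Fin k → BNode)))
    (mem : EM → EM → Prop) (δe : EM → Ordinal) (E : Set EM)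
    (p : Set BNode × Set EM) : Prop :=
  p.1.Finite ∧ p.1 ⊆ T ∧ (∀ x ∈ p.1, ht x ∈ C) ∧ piClosed p.1 ∧
  SectionsInKPhi T K C N p.1 ∧
  p.2.Finite ∧ p.2 ⊆ E ∧
  (∀ M ∈ p.2, ∀ M' ∈ p.2, M = M' ∨ mem M M' ∨ mem M' M) ∧
  (∀ x ∈ p.1, ∃ M ∈ p.2, ht x = δe M)

/-- The order of `∂*(K)`: coordinatewise reverse inclusion. -/
def condLE (p q : Set BNode × Set EM) : Prop := q.1 ⊆ p.1 ∧ q.2 ⊆ p.2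

end Forcing

/-- Closure of `X` in the tree topology. -/
def clTree (X : Set BNode) : Set BNode :=
  X ∪ {t | Order.IsSuccLimit (ht t) ∧ ∀ β < ht t, ∃ s ∈ X, extends' s t ∧ β ≤ ht s}

/-! ### Set-theoretic background: elementary submodels of `(V, ∈)`, properness, BPFA -/

/-- The language with a single binary relation (interpreted below as membership). -/
abbrev memLang : FirstOrder.Language := FirstOrder.Language.order

/-- `ZFSet.{0}` as a structure in the membership language: the unique binary relation
symbol is interpreted as `∈`. -/
instance : memLang.Structure ZFSet.{0} where
  RelMap | .le => fun x => x 0 ∈ x 1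

/-- `R` is (codes) a partial order on the set `P`. -/
def ZIsPoset (P R : ZFSet.{0}) : Prop :=
  (∀ x y : ZFSet.{0}, ZFSet.pair x y ∈ R → x ∈ P ∧ y ∈ P) ∧
  (∀ x ∈ P, ZFSet.pair x x ∈ R) ∧
  (∀ x y z : ZFSet.{0}, ZFSet.pair x y ∈ R → ZFSet.pair y z ∈ R → ZFSet.pair x z ∈ R) ∧
  (∀ x y : ZFSet.{0}, ZFSet.pair x y ∈ R → ZFSet.pair y x ∈ R → x = y)

def ZCompat (P R p q : ZFSet.{0}) : Prop :=
  ∃ r ∈ P, ZFSet.pair r p ∈ R ∧ ZFSet.pair r q ∈ R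

def ZDense (P R D : ZFSet.{0}) : Prop :=
  (∀ x ∈ D, x ∈ P) ∧ ∀ p ∈ P, ∃ q ∈ D, ZFSet.pair q p ∈ R

/-- Properness of the poset `(P, R)`, via countable elementary submodels of the
universe of sets: every condition in such a model has a generic extension. -/
def ZIsProper (P R : ZFSet.{0}) : Prop :=
  ∀ M : memLang.ElementarySubstructure ZFSet.{0}, (M : Set ZFSet.{0}).Countable →
    P ∈ (M : Set ZFSet.{0}) → R ∈ (M : Set ZFSet.{0}) →
    ∀ p ∈ (M : Set ZFSet.{0}), p ∈ P →
      ∃ q ∈ P, ZFSet.pair q p ∈ R ∧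
        ∀ D ∈ (M : Set ZFSet.{0}), ZDense P R D →
          ∀ r ∈ P, ZFSet.pair r q ∈ R → ∃ s ∈ (M : Set ZFSet.{0}), s ∈ D ∧ ZCompat P R s r

/-- The Bounded Proper Forcing Axiom: for every proper poset and `ℵ₁`-many maximal
antichains of size `≤ ℵ₁`, there is a filter meeting them all. -/
def BPFA : Prop :=
  ∀ P R : ZFSet.{0}, ZIsPoset P R → ZIsProper P R →
    ∀ (ι : Type 1) (A : ι → ZFSet.{0}), Cardinal.mk ι ≤ Cardinal.aleph 1 →
      (∀ i, (A i).toSet ⊆ P.toSet ∧ Cardinal.mk (A i).toSet ≤ Cardinal.aleph 1 ∧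
        (∀ a ∈ A i, ∀ b ∈ A i, a ≠ b → ¬ ZCompat P R a b) ∧
        (∀ p ∈ P, ∃ a ∈ A i, ZCompat P R a p)) →
      ∃ G : Set ZFSet.{0}, G ⊆ P.toSet ∧
        (∀ p ∈ G, ∀ q ∈ P.toSet, ZFSet.pair p q ∈ R → q ∈ G) ∧
        (∀ p ∈ G, ∀ q ∈ G, ∃ r ∈ G, ZFSet.pair r p ∈ R ∧ ZFSet.pair r q ∈ R) ∧
        ∀ i, ∃ a, a ∈ A i ∧ a ∈ G

/-! ### The axiom φ, stated for Aronszajn trees of `n`-tuples (the trees used in the paper) -/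

/-- An Aronszajn tree of `n`-tuples (a subtree of the `n`-th power of `2^{<ω₁}`). -/
def TupAronszajn (n : ℕ) (𝒯 : Set (Fin n → BNode)) : Prop :=
  (∀ σ ∈ 𝒯, (∀ i j, ht (σ i) = ht (σ j))) ∧
  (∀ σ ∈ 𝒯, ∀ α, tres σ α ∈ 𝒯) ∧ ¬ 𝒯.Countable ∧
  (∀ α, {σ ∈ 𝒯 | ∀ i, ht (σ i) = α}.Countable) ∧
  (∀ c ⊆ 𝒯, (∀ σ ∈ c, ∀ τ ∈ c, tExt σ τ ∨ tExt τ σ) → c.Countable)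

/-- A subtree of a tuple-tree. -/
def TupSubtree {n : ℕ} (𝒯 A : Set (Fin n → BNode)) : Prop :=
  A ⊆ 𝒯 ∧ (∀ σ ∈ A, ∀ α, tres σ α ∈ A) ∧ ¬ A.Countable

/-- `F^⊥` for a family `F` of subtrees of `𝒯`. -/
def GPerp {n : ℕ} (𝒯 : Set (Fin n → BNode)) (F : Set (Set (Fin n → BNode))) :
    Set (Set (Fin n → BNode)) :=
  {B | TupSubtree 𝒯 B ∧ ∀ A ∈ F, (A ∩ B).Countable}

/-- `φ₀(F)` for a family `F` of subtrees of the tree `𝒯`. -/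
def GPhi0 {n : ℕ} (𝒯 : Set (Fin n → BNode)) (F : Set (Set (Fin n → BNode))) : Prop :=
  ∃ (C : Set Ordinal) (N : Ordinal → Set (Set (Fin n → BNode))),
    IsClubBelow C ∧ (∀ ξ ∈ C, (N ξ).Countable ∧ N ξ ⊆ F ∪ GPerp 𝒯 F) ∧
    (∀ ξ ∈ C, ∀ η ∈ C, ξ ≤ η → N ξ ⊆ N η) ∧
    (∀ ν ∈ C, IsLimitOf C ν → N ν = ⋃ ξ ∈ C ∩ Set.Iio ν, N ξ) ∧
    ∀ ν ∈ C, ∀ σ ∈ 𝒯, (∀ i, ht (σ i) = ν) →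
      (∃ ν₀ < ν, ∀ ξ ∈ C, ν₀ < ξ → ξ < ν → ∃ A ∈ F, A ∈ N ξ ∧ tres σ ξ ∈ A) ∨
      (∃ B ∈ GPerp 𝒯 F, B ∈ N ν ∧ σ ∈ B)

/-- The axiom `φ`: for every Aronszajn (tuple-)tree `𝒯` and every family `F`
of subtrees of `𝒯`, `φ₀(F)` holds. -/
def phiAxiom : Prop :=
  ∀ (n : ℕ) (𝒯 : Set (Fin n → BNode)), TupAronszajn n 𝒯 →
    ∀ F : Set (Set (Fin n → BNode)), (∀ A ∈ F, TupSubtree 𝒯 A) → GPhi0 𝒯 F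

end Basis5
namespace Basis5

open scoped Ordinal

/-!
Suppose no two members of the sequence have their meet in `K^{[n]}`. Shrink `S` to limit points
of `C`. For such `ξ` the witness `B_ξ ∈ F_n^⊥ ∩ N_ξ` already lies in `N_γ` for some `γ ∈ C`
below `ξ`, and by coherence `γ` can be taken above the finite sets where the coordinates of
`σ_ξ` differ. Pressing down fixes `γ` on an uncountable set; as `N_γ` and the finite difference
patterns below `γ` are countable, uncountably many `σ_ξ` share one `B` and one pattern. The tree
generated by these `σ_ξ` is then regular and its meets are meets of the `σ_ξ`, so it belongs to
`F_n`, yet it meets `B ∈ F_n^⊥` uncountably.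
-/

lemma exists_fiber_not_countable {α β : Type*} {U : Set α} {V : Set β} {F : α → β}
    (hU : ¬ U.Countable) (hV : V.Countable) (hF : ∀ x ∈ U, F x ∈ V) :
    ∃ v, ¬ {x ∈ U | F x = v}.Countable := by
  by_contra! h
  refine hU ((hV.biUnion fun v _ => h v).mono fun x hx => ?_)
  exact Set.mem_biUnion (hF x hx) ⟨hx, rfl⟩

lemma csInf_inter_Iio {α : Type*} [ConditionallyCompleteLinearOrderBot α] [WellFoundedLT α]
    {D : Set α} {a : α} (h : ∃ ζ ∈ D, ζ < a) : sInf (D ∩ Set.Iio a) = sInf D := by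
  obtain ⟨ζ, hζ, hζα⟩ := h
  refine le_antisymm (csInf_le' ⟨csInf_mem ⟨ζ, hζ⟩, (csInf_le' hζ).trans_lt hζα⟩) ?_
  exact csInf_le_csInf' ⟨ζ, hζ, hζα⟩ Set.inter_subset_left

lemma omega1_eq : omega1 = ω₁ := Cardinal.ord_aleph 1

lemma countable_Iio_of_lt_omega1 {a : Ordinal} (ha : a < omega1) : (Set.Iio a).Countable := by
  rw [← Set.countable_coe_iff, ← Cardinal.mk_le_aleph0_iff, Cardinal.mk_Iio_ordinal,
    Cardinal.lift_le_aleph0, ← Cardinal.lt_aleph_one_iff, ← Cardinal.lt_ord]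
  exact ha

lemma add_one_lt_omega1 {a : Ordinal} (ha : a < omega1) : a + 1 < omega1 := by
  rw [omega1_eq] at ha ⊢
  exact (Cardinal.isSuccLimit_omega 1).add_one_lt ha

lemma sSup_lt_omega1 {X : Set Ordinal} (hX : X.Countable) (h : X ⊆ Set.Iio omega1) :
    sSup X < omega1 := by
  have := hX.to_subtype
  rw [sSup_eq_iSup', omega1_eq]
  exact Ordinal.iSup_lt_omega_one fun x => omega1_eq ▸ h x.2

lemma isLimitOf_iff {C : Set Ordinal} {a : Ordinal} :
    IsLimitOf C a ↔ 0 < a ∧ ∀ x < a, ∃ c ∈ C, x < c ∧ c < a := by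
  constructor
  · rintro ⟨hne, hsup⟩
    refine ⟨pos_of_gt hne.some_mem.2, fun x hx => ?_⟩
    rw [← hsup] at hx
    obtain ⟨c, ⟨hcC, hca⟩, hxc⟩ := exists_lt_of_lt_csSup hne hx
    exact ⟨c, hcC, hxc, hca⟩
  · rintro ⟨ha, hcof⟩
    obtain ⟨y, hyC, -, hya⟩ := hcof 0 ha
    refine ⟨⟨y, hyC, hya⟩, le_antisymm (csSup_le ⟨y, hyC, hya⟩ fun c hc => hc.2.le) ?_⟩
    refine le_of_forall_lt fun x hx => ?_
    obtain ⟨c, hcC, hxc, hca⟩ := hcof x hx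
    exact hxc.trans_le (le_csSup bddAbove_Iio.inter_of_right ⟨hcC, hca⟩)

lemma IsLimitOf.exists_mem_finite_subset_Iio {C F : Set Ordinal} {a : Ordinal}
    (h : IsLimitOf C a) (hF : F.Finite) (hFa : F ⊆ Set.Iio a) :
    ∃ γ ∈ C, F ⊆ Set.Iio γ ∧ γ < a := by
  obtain ⟨ha, hcof⟩ := isLimitOf_iff.1 h
  have hsup : sSup F < a := by
    rcases F.eq_empty_or_nonempty with rfl | hne
    · rwa [csSup_empty]
    · exact (hF.csSup_lt_iff hne).2 hFa
  obtain ⟨γ, hγC, hFγ, hγa⟩ := hcof _ hsup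
  exact ⟨γ, hγC, fun x hx => (le_csSup hF.bddAbove hx).trans_lt hFγ, hγa⟩

lemma IsClubBelow.mem_of_isLimitOf {C : Set Ordinal} (hC : IsClubBelow C) {a : Ordinal}
    (ha : a < omega1) (h : IsLimitOf C a) : a ∈ C :=
  hC.2.2 a ha h.1 h.2

lemma IsClubBelow.exists_next {C : Set Ordinal} (hC : IsClubBelow C) :
    ∃ G : Ordinal → Ordinal, ∀ x < omega1, G x ∈ C ∧ x < G x := by
  choose! G hGC hG using hC.2.1
  exact ⟨G, fun x hx => ⟨hGC x hx, hG x hx⟩⟩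

def closurePoints (G : Ordinal → Ordinal) : Set Ordinal :=
  {s | 0 < s ∧ s < omega1 ∧ ∀ x < s, G x < s}

lemma exists_mem_closurePoints_gt {G : Ordinal → Ordinal} (hG : ∀ x < omega1, G x < omega1)
    {a : Ordinal} (ha : a < omega1) : ∃ s ∈ closurePoints G, a < s := by
  set f : Ordinal → Ordinal := fun y => max y (⨆ x : Set.Iio y, G x) + 1
  have hGf : ∀ y, ∀ x < y, G x < f y := fun y x hx =>
    (Ordinal.le_iSup (fun x : Set.Iio y => G x) ⟨x, hx⟩).trans_lt
      ((le_max_right _ _).trans_lt (Order.lt_add_one_iff.2 le_rfl))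
  have hf : ∀ y < omega1, f y < omega1 := by
    intro y hy
    have := (countable_Iio_of_lt_omega1 hy).to_subtype
    refine add_one_lt_omega1 (max_lt hy ?_)
    rw [omega1_eq] at hG ⊢
    exact Ordinal.iSup_lt_omega_one fun x => hG x (x.2.trans (omega1_eq ▸ hy))
  have hfix : ∀ k, f^[k] a ≤ Ordinal.nfp f a := Ordinal.iterate_le_nfp f a
  have ha_lt : a < Ordinal.nfp f a :=
    ((le_max_left _ _).trans_lt (Order.lt_add_one_iff.2 le_rfl)).trans_le (hfix 1)
  refine ⟨Ordinal.nfp f a, ⟨pos_of_gt ha_lt, ?_, fun x hx => ?_⟩, ha_lt⟩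
  · rw [omega1_eq] at hf ha ⊢
    exact Ordinal.nfp_lt_ord (by simp) hf ha
  · obtain ⟨k, hk⟩ := Ordinal.lt_nfp_iff.1 hx
    exact (hGf _ x hk).trans_le (Function.iterate_succ_apply' f k a ▸ hfix (k + 1))

lemma isClubBelow_closurePoints {G : Ordinal → Ordinal} (hG : ∀ x < omega1, G x < omega1) :
    IsClubBelow (closurePoints G) := by
  refine ⟨fun s hs => hs.2.1, fun a ha => exists_mem_closurePoints_gt hG ha,
    fun a ha hne hsup => ?_⟩
  obtain ⟨ha0, hcof⟩ := isLimitOf_iff.1 ⟨hne, hsup⟩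
  refine ⟨ha0, ha, fun x hx => ?_⟩
  obtain ⟨s, hs, hxs, hsa⟩ := hcof x hx
  exact (hs.2.2 x hxs).trans hsa

lemma isLimitOf_of_mem_closurePoints {C : Set Ordinal} {G : Ordinal → Ordinal}
    (hG : ∀ x < omega1, ∃ c ∈ C, x < c ∧ c ≤ G x) {s : Ordinal} (hs : s ∈ closurePoints G) :
    IsLimitOf C s := by
  refine isLimitOf_iff.2 ⟨hs.1, fun x hx => ?_⟩
  obtain ⟨c, hcC, hxc, hcG⟩ := hG x (hx.trans hs.2.1)
  exact ⟨c, hcC, hxc, hcG.trans_lt (hs.2.2 x hx)⟩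

lemma IsStationary.nonempty {S : Set Ordinal} (hS : IsStationary S) : S.Nonempty :=
  (hS.2 _ (isClubBelow_closurePoints (G := id) fun _ hx => hx)).imp fun _ h => h.1

lemma IsStationary.inter_isClubBelow {S D : Set Ordinal} (hS : IsStationary S)
    (hD : IsClubBelow D) : IsStationary (S ∩ D) := by
  refine ⟨fun x hx => hS.1 hx.1, fun E hE => ?_⟩
  obtain ⟨GD, hGD⟩ := hD.exists_next
  obtain ⟨GE, hGE⟩ := hE.exists_next
  have hG : ∀ x < omega1, max (GD x) (GE x) < omega1 := fun x hx =>
    max_lt (hD.1 (hGD x hx).1) (hE.1 (hGE x hx).1)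
  obtain ⟨s, hsS, hs⟩ := hS.2 _ (isClubBelow_closurePoints hG)
  refine ⟨s, ⟨hsS, hD.mem_of_isLimitOf hs.2.1 ?_⟩, hE.mem_of_isLimitOf hs.2.1 ?_⟩
  · exact isLimitOf_of_mem_closurePoints
      (fun x hx => ⟨GD x, (hGD x hx).1, (hGD x hx).2, le_max_left _ _⟩) hs
  · exact isLimitOf_of_mem_closurePoints
      (fun x hx => ⟨GE x, (hGE x hx).1, (hGE x hx).2, le_max_right _ _⟩) hs

/-- Weak Fodor: were every fibre countable, a closure point in `S` of `η ↦ sup f⁻¹{η}` would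
lie strictly above its own fibre. -/
lemma IsStationary.exists_not_countable_fiber {S : Set Ordinal} (hS : IsStationary S)
    {f : Ordinal → Ordinal} (hf : ∀ ξ ∈ S, f ξ < ξ) :
    ∃ η, ¬ {ξ ∈ S | f ξ = η}.Countable := by
  by_contra! h
  set g : Ordinal → Ordinal := fun η => sSup {ξ ∈ S | f ξ = η}
  have hfiber : ∀ η, {ξ ∈ S | f ξ = η} ⊆ Set.Iio omega1 := fun η ξ hξ => hS.1 hξ.1
  obtain ⟨ξ, hξS, hξ⟩ := hS.2 _
    (isClubBelow_closurePoints (G := g) fun η _ => sSup_lt_omega1 (h η) (hfiber η))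
  have : ξ ≤ g (f ξ) := le_csSup (bddAbove_Iio.mono (hfiber _)) ⟨hξS, rfl⟩
  exact (this.trans_lt (hξ.2.2 _ (hf ξ hξS))).false

lemma ht_eq_of {t : BNode} {a : Ordinal} (h : ∀ ξ, (t.1 ξ).isSome ↔ ξ < a) : ht t = a :=
  le_antisymm (csInf_le' h) <| le_csInf ⟨a, h⟩ fun a' h' =>
    not_lt.1 fun ha' => lt_irrefl a' ((h' a').1 ((h a').2 ha'))

lemma isSome_iff_lt_ht (t : BNode) (ξ : Ordinal) : (t.1 ξ).isSome ↔ ξ < ht t := by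
  obtain ⟨a, -, ha⟩ := t.2
  rw [ht_eq_of ha, ha]

lemma val_eq_none_of_ht_le {t : BNode} {ξ : Ordinal} (h : ht t ≤ ξ) : t.1 ξ = none := by
  rw [← Option.not_isSome_iff_eq_none, isSome_iff_lt_ht]
  exact h.not_gt

lemma BNode.ext {s t : BNode} (h : ∀ ξ, s.1 ξ = t.1 ξ) : s = t := Subtype.ext (funext h)

lemma restrict_val (t : BNode) (α ξ : Ordinal) :
    (restrict t α).1 ξ = if ξ < α then t.1 ξ else none := rfl

lemma ht_restrict (t : BNode) (α : Ordinal) : ht (restrict t α) = min α (ht t) := by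
  refine ht_eq_of fun ξ => ?_
  by_cases h : ξ < α <;> simp [restrict_val, h, isSome_iff_lt_ht]

lemma restrict_eq_self {t : BNode} {α : Ordinal} (h : ht t ≤ α) : restrict t α = t := by
  refine BNode.ext fun ξ => ?_
  by_cases hξ : ξ < α
  · simp [restrict_val, hξ]
  · simp [restrict_val, hξ, val_eq_none_of_ht_le (h.trans (not_lt.1 hξ))]

lemma restrict_restrict (t : BNode) (α β : Ordinal) :
    restrict (restrict t α) β = restrict t (min α β) := by
  refine BNode.ext fun ξ => ?_
  by_cases h1 : ξ < α <;> by_cases h2 : ξ < β <;> simp [restrict_val, h1, h2]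

lemma extends'_iff {s t : BNode} : extends' s t ↔ ∀ ξ < ht s, s.1 ξ = t.1 ξ := by
  refine ⟨fun h ξ hξ => by rw [← h, restrict_val, if_pos hξ], fun h => BNode.ext fun ξ => ?_⟩
  by_cases hξ : ξ < ht s
  · rw [restrict_val, if_pos hξ, h ξ hξ]
  · rw [restrict_val, if_neg hξ, val_eq_none_of_ht_le (not_lt.1 hξ)]

lemma extends'_refl (s : BNode) : extends' s s := extends'_iff.2 fun _ _ => rfl

lemma diffSet_restrict (s t : BNode) (α : Ordinal) :
    diffSet (restrict s α) (restrict t α) = diffSet s t ∩ Set.Iio α := by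
  ext ξ
  by_cases h : ξ < α <;> simp [diffSet, restrict_val, h]

lemma lt_ht_of_mem_diffSet {s t : BNode} {ξ : Ordinal} (h : ξ ∈ diffSet s t) :
    ξ < ht s ∨ ξ < ht t := by
  by_contra! hc
  exact h (by rw [val_eq_none_of_ht_le hc.1, val_eq_none_of_ht_le hc.2])

lemma exists_mem_diffSet_lt_of_restrict_ne {s t : BNode} {α : Ordinal}
    (h : restrict s α ≠ restrict t α) : ∃ ζ ∈ diffSet s t, ζ < α := by
  by_contra! hc
  refine h (BNode.ext fun ζ => ?_)
  by_cases hζ : ζ < α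
  · rw [restrict_val, restrict_val, if_pos hζ, if_pos hζ]
    exact not_not.1 fun hne => (hc ζ hne).not_gt hζ
  · rw [restrict_val, restrict_val, if_neg hζ, if_neg hζ]

lemma lexLE_restrict {s t : BNode} (h : lexLE s t) (α : Ordinal) :
    lexLE (restrict s α) (restrict t α) := by
  by_cases he : restrict s α = restrict t α
  · exact Or.inl he
  rcases h with rfl | hval
  · exact absurd rfl he
  have hlt := exists_mem_diffSet_lt_of_restrict_ne he
  have hdelta : delta (restrict s α) (restrict t α) = delta s t := by
    rw [delta, delta, diffSet_restrict, csInf_inter_Iio hlt]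
  obtain ⟨ζ, hζ, hζα⟩ := hlt
  right
  rw [hdelta, restrict_val, if_pos (show delta s t < α from (csInf_le' hζ).trans_lt hζα), hval]

section Tuples

variable {n : ℕ}

@[simp]
lemma tres_apply (σ : Fin n → BNode) (α : Ordinal) (i : Fin n) :
    tres σ α i = restrict (σ i) α := rfl

lemma ht_tres {σ : Fin n → BNode} {α : Ordinal} (hα : ∀ i, α ≤ ht (σ i)) (i : Fin n) :
    ht (tres σ α i) = α := by
  rw [tres_apply, ht_restrict, min_eq_left (hα i)]

lemma tres_tres (σ : Fin n → BNode) (α β : Ordinal) : tres (tres σ α) β = tres σ (min α β) :=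
  funext fun i => restrict_restrict (σ i) α β

lemma IsTup.tres {T : Set BNode} {σ : Fin n → BNode} (hσ : IsTup T n σ) (hT : DownClosed T)
    (α : Ordinal) : IsTup T n (tres σ α) := by
  refine ⟨fun i => hT _ (hσ.1 i) α, fun i j => ?_, fun i j hij => ?_⟩
  · simp only [tres_apply, ht_restrict, hσ.2.1 i j]
  · exact lexLE_restrict (hσ.2.2 i j hij) α

lemma tdiff_tres_inter_Iio (σ τ : Fin n → BNode) (α β : Ordinal) :
    tdiff (tres σ α) (tres τ β) ∩ Set.Iio (min α β) = tdiff σ τ ∩ Set.Iio (min α β) := by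
  ext ζ
  simp only [tdiff, Set.mem_inter_iff, Set.mem_ofPred_eq, Set.mem_Iio, lt_min_iff]
  refine and_congr_left fun ⟨hα, hβ⟩ => ?_
  simp [restrict_val, hα, hβ]

lemma tIncomp_of_mem_tdiff {σ τ : Fin n → BNode} {ζ : Ordinal} (hζ : ζ ∈ tdiff σ τ)
    (hσ : ∀ i, ζ < ht (σ i)) (hτ : ∀ i, ζ < ht (τ i)) : tIncomp σ τ := by
  obtain ⟨i, hi⟩ := hζ
  exact ⟨fun h => hi (extends'_iff.1 (h i) ζ (hσ i)),
    fun h => hi (extends'_iff.1 (h i) ζ (hτ i)).symm⟩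

lemma tIncomp.exists_mem_tdiff_lt {ρ ρ' : Fin n → BNode} {α β : Ordinal}
    (hρ : ∀ i, ht (ρ i) = α) (hρ' : ∀ i, ht (ρ' i) = β) (h : tIncomp ρ ρ') :
    ∃ ζ ∈ tdiff ρ ρ', ζ < α ∧ ζ < β := by
  rcases le_total α β with hαβ | hβα
  · obtain ⟨i, hi⟩ := not_forall.1 h.1
    obtain ⟨ζ, hζ, hne⟩ := not_forall₂.1 (mt extends'_iff.2 hi)
    rw [hρ i] at hζ
    exact ⟨ζ, ⟨i, hne⟩, hζ, hζ.trans_le hαβ⟩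
  · obtain ⟨i, hi⟩ := not_forall.1 h.2
    obtain ⟨ζ, hζ, hne⟩ := not_forall₂.1 (mt extends'_iff.2 hi)
    rw [hρ' i] at hζ
    exact ⟨ζ, ⟨i, Ne.symm hne⟩, hζ.trans_le hβα, hζ⟩

lemma subset_tDownClosure {T : Set BNode} {X : Set (Fin n → BNode)}
    (hX : ∀ σ ∈ X, IsTup T n σ) : X ⊆ tDownClosure X := by
  intro σ hσ
  refine ⟨σ, hσ, ⨅ i, ht (σ i), fun i => ciInf_le (OrderBot.bddBelow _) i, funext fun i => ?_⟩
  have : Nonempty (Fin n) := ⟨i⟩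
  have hinf : ⨅ j, ht (σ j) = ht (σ i) :=
    le_antisymm (ciInf_le (OrderBot.bddBelow _) i) (le_ciInf fun j => ((hX σ hσ).2.1 j i).ge)
  rw [tres_apply, hinf, restrict_eq_self le_rfl]

lemma twedge_tDownClosure_subset (X : Set (Fin n → BNode)) :
    twedge (tDownClosure X) ⊆ twedge X := by
  rintro w ⟨_, ⟨σ, hσ, α, hα, rfl⟩, _, ⟨τ, hτ, β, hβ, rfl⟩, hinc, rfl⟩
  obtain ⟨ζ, hζ, hζα, hζβ⟩ := hinc.exists_mem_tdiff_lt (ht_tres hα) (ht_tres hβ)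
  have hζ' : ζ ∈ tdiff σ τ ∩ Set.Iio (min α β) :=
    tdiff_tres_inter_Iio σ τ α β ▸ ⟨hζ, lt_min hζα hζβ⟩
  have hdelta : tdelta (tres σ α) (tres τ β) = tdelta σ τ := by
    rw [tdelta, tdelta, ← csInf_inter_Iio ⟨ζ, hζ, lt_min hζα hζβ⟩, tdiff_tres_inter_Iio,
      csInf_inter_Iio ⟨ζ, hζ'⟩]
  have hdα : tdelta σ τ < α := (csInf_le' hζ'.1).trans_lt hζα
  refine ⟨σ, hσ, τ, hτ, tIncomp_of_mem_tdiff hζ'.1 (fun i => hζα.trans_le (hα i))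
    (fun i => hζβ.trans_le (hβ i)), ?_⟩
  rw [tmeet, tmeet, hdelta, tres_tres, min_eq_right hdα.le]

def diffPattern (σ : Fin n → BNode) (i j : Fin n) : Set Ordinal := diffSet (σ i) (σ j)

lemma regSet_tDownClosure {X : Set (Fin n → BNode)}
    (hX : ∀ σ ∈ X, ∀ τ ∈ X, diffPattern σ = diffPattern τ) : RegSet (tDownClosure X) := by
  rintro _ ⟨σ, hσ, α, hα, rfl⟩ _ ⟨τ, hτ, β, hβ, rfl⟩ hle hn i
  set o : Fin n := ⟨0, hn⟩
  have hαβ : α ≤ β := by simpa only [ht_tres hα, ht_tres hβ] using hle o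
  have hpat : diffSet (τ i) (τ o) = diffSet (σ i) (σ o) :=
    congrFun (congrFun (hX τ hτ σ hσ) i) o
  simp only [tres_apply, diffSet_restrict, ht_restrict, min_eq_left (hα o), hpat,
    Set.inter_assoc, Set.Iio_inter_Iio, min_eq_right hαβ]

lemma isTupSubtree_tDownClosure {T : Set BNode} {X : Set (Fin n → BNode)} (hT : DownClosed T)
    (hX : ∀ σ ∈ X, IsTup T n σ) (hunc : ¬ X.Countable) :
    IsTupSubtree T n (tDownClosure X) := by
  refine ⟨?_, ?_, fun h => hunc (h.mono (subset_tDownClosure hX))⟩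
  · rintro _ ⟨σ, hσ, α, -, rfl⟩
    exact (hX σ hσ).tres hT α
  · rintro _ ⟨σ, hσ, α, hα, rfl⟩ β
    exact ⟨σ, hσ, min α β, fun i => (min_le_left _ _).trans (hα i), tres_tres σ α β⟩

lemma tDownClosure_mem_Fn {T K : Set BNode} {X : Set (Fin n → BNode)} (hT : DownClosed T)
    (hX : ∀ σ ∈ X, IsTup T n σ) (hunc : ¬ X.Countable)
    (hpat : ∀ σ ∈ X, ∀ τ ∈ X, diffPattern σ = diffPattern τ)
    (hK : ∀ w ∈ twedge X, ¬ KTup T K n w) : tDownClosure X ∈ Fn T K n :=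
  ⟨isTupSubtree_tDownClosure hT hX hunc, regSet_tDownClosure hpat,
    fun w hw => hK w (twedge_tDownClosure_subset X hw)⟩

lemma not_isTupSubtree_zero {T : Set BNode} (R : Set (Fin 0 → BNode)) :
    ¬ IsTupSubtree T 0 R :=
  fun h => h.2.2 R.to_countable

lemma LevelSeq.injOn {T : Set BNode} {S : Set Ordinal} {σ : Ordinal → Fin n → BNode}
    (h : LevelSeq T n S σ) (hn : 0 < n) : S.InjOn σ := fun ξ hξ η hη he => by
  rw [← (h ξ hξ).2 ⟨0, hn⟩, ← (h η hη).2 ⟨0, hn⟩, he]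

end Tuples

section PressingDown

variable {T K : Set BNode} {n : ℕ} {C : Set Ordinal} {N : Ordinal → Set (Set (Fin n → BNode))}

lemma countable_finite_diffPatterns {η : Ordinal} (hη : η < omega1) :
    {P : Fin n → Fin n → Set Ordinal | ∀ i j, (P i j).Finite ∧ P i j ⊆ Set.Iio η}.Countable :=
  Set.countable_pi fun _ => Set.countable_pi fun _ =>
    Set.countable_ofPred_finite_subset (countable_Iio_of_lt_omega1 hη)

lemma diffPattern_finite (hcoh : Coherent T) {σ : Fin n → BNode} (hσ : IsTup T n σ)
    (i j : Fin n) : (diffPattern σ i j).Finite :=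
  hcoh _ (hσ.1 i) _ (hσ.1 j) (hσ.2.1 i j)

lemma exists_witness_below (hcoh : Coherent T) (hn : 0 < n) (hW : Phi0Witness T K n C N)
    {ξ : Ordinal} (hξC : ξ ∈ C) (hlim : IsLimitOf C ξ) {σ : Fin n → BNode}
    (hht : ∀ i, ht (σ i) = ξ) (hσ : σ ∈ KPhi T K n C N) :
    ∃ γ ∈ C, γ < ξ ∧ ∃ B ∈ FnPerp T K n, B ∈ N γ ∧ σ ∈ B ∧
      ∀ i j, diffPattern σ i j ⊆ Set.Iio γ := by
  obtain ⟨-, -, hNmono, hNcont, -⟩ := hW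
  obtain ⟨hσT, ν, -, hν, B, hB, hBN, hσB⟩ := hσ
  obtain rfl : ν = ξ := (hν ⟨0, hn⟩).symm.trans (hht _)
  rw [hNcont ν hξC hlim] at hBN
  obtain ⟨γ₁, ⟨hγ₁C, hγ₁ν⟩, hBγ₁⟩ := Set.mem_iUnion₂.1 hBN
  set F := insert γ₁ (⋃ i, ⋃ j, diffPattern σ i j)
  have hF : F.Finite := .insert _ <|
    Set.finite_iUnion fun i => Set.finite_iUnion fun j => diffPattern_finite hcoh hσT i j
  have hFν : F ⊆ Set.Iio ν := by
    refine Set.insert_subset hγ₁ν fun x hx => ?_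
    obtain ⟨i, j, hx⟩ := Set.mem_iUnion₂.1 hx
    rcases lt_ht_of_mem_diffSet hx with h | h <;> simpa only [hht, Set.mem_Iio] using h
  obtain ⟨γ, hγC, hFγ, hγν⟩ := hlim.exists_mem_finite_subset_Iio hF hFν
  refine ⟨γ, hγC, hγν, B, hB, hNmono γ₁ hγ₁C γ hγC (hFγ (Set.mem_insert _ _)).le hBγ₁, hσB,
    fun i j x hx => hFγ (Set.mem_insert_of_mem _ (Set.mem_iUnion₂.2 ⟨i, j, hx⟩))⟩

lemma exists_regular_subseq_in_FnPerp (hcoh : Coherent T) (hn : 0 < n)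
    (hW : Phi0Witness T K n C N) {S : Set Ordinal} (hS : IsStationary S) (hSC : S ⊆ C)
    {σ : Ordinal → Fin n → BNode} (hseq : LevelSeq T n S σ)
    (hKφ : ∀ ξ ∈ S, σ ξ ∈ KPhi T K n C N) :
    ∃ S₂ ⊆ S, ¬ S₂.Countable ∧ (∃ B ∈ FnPerp T K n, σ '' S₂ ⊆ B) ∧
      ∀ ξ ∈ S₂, ∀ η ∈ S₂, diffPattern (σ ξ) = diffPattern (σ η) := by
  have hC : IsClubBelow C := hW.1
  obtain ⟨G, hG⟩ := hC.exists_next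
  have hS' : IsStationary (S ∩ closurePoints G) :=
    hS.inter_isClubBelow (isClubBelow_closurePoints fun x hx => hC.1 (hG x hx).1)
  have hlim : ∀ ξ ∈ closurePoints G, IsLimitOf C ξ := fun _ =>
    isLimitOf_of_mem_closurePoints (C := C) fun x hx => ⟨G x, (hG x hx).1, (hG x hx).2, le_rfl⟩
  choose! γ hγC hγξ B hB hBN hσB hpat using fun ξ (hξ : ξ ∈ S ∩ closurePoints G) =>
    exists_witness_below hcoh hn hW (hSC hξ.1) (hlim ξ hξ.2) (hseq ξ hξ.1).2 (hKφ ξ hξ.1)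
  obtain ⟨η, hη⟩ := hS'.exists_not_countable_fiber hγξ
  obtain ⟨ξ₀, hξ₀, rfl⟩ := Set.Infinite.nonempty fun h => hη h.countable
  have hγ₀ : γ ξ₀ ∈ C := hγC ξ₀ hξ₀
  obtain ⟨⟨B₀, P⟩, hP⟩ := exists_fiber_not_countable (F := fun ξ => (B ξ, diffPattern (σ ξ))) hη
    ((hW.2.1 _ hγ₀).1.prod (countable_finite_diffPatterns (hC.1 hγ₀))) fun ξ ⟨hξ, hγ⟩ =>
      ⟨hγ ▸ hBN ξ hξ, fun i j => ⟨diffPattern_finite hcoh (hseq ξ hξ.1).1 i j, hγ ▸ hpat ξ hξ i j⟩⟩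
  simp only [Prod.ext_iff] at hP
  refine ⟨_, fun ξ hξ => hξ.1.1.1, hP, ⟨B₀, ?_, ?_⟩, fun ξ hξ η hη => hξ.2.2.trans hη.2.2.symm⟩
  · obtain ⟨ξ₁, hξ₁⟩ := Set.Infinite.nonempty fun h => hP h.countable
    exact hξ₁.2.1 ▸ hB ξ₁ hξ₁.1.1
  · rintro _ ⟨ξ, hξ, rfl⟩
    exact hξ.2.1 ▸ hσB ξ hξ.1.1

end PressingDown

theorem stmt10_general (T K : Set BNode) (hcoh : Coherent T)
    (hAr : IsAronszajn T)
    (n : ℕ) (C : Set Ordinal) (N : Ordinal → Set (Set (Fin n → BNode)))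
    (hW : Phi0Witness T K n C N) (S : Set Ordinal)
    (hS : IsStationary S) (hSC : S ⊆ C)
    (σ : Ordinal → Fin n → BNode) (hseq : LevelSeq T n S σ)
    (hKφ : ∀ ξ ∈ S, σ ξ ∈ KPhi T K n C N) :
    ∃ ξ ∈ S, ∃ η ∈ S, ξ ≠ η ∧ tIncomp (σ ξ) (σ η) ∧
      KTup T K n (tmeet (σ ξ) (σ η)) := by
  rcases Nat.eq_zero_or_pos n with rfl | hn
  · obtain ⟨ξ, hξ⟩ := hS.nonempty
    obtain ⟨-, -, -, -, B, hB, -⟩ := hKφ ξ hξ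
    exact (not_isTupSubtree_zero B hB.1).elim
  by_contra hmeet
  obtain ⟨S₂, hS₂S, hS₂, ⟨B, hB, hσB⟩, hpat⟩ :=
    exists_regular_subseq_in_FnPerp hcoh hn hW hS hSC hseq hKφ
  have hX : ¬ (σ '' S₂).Countable := fun h =>
    hS₂ (Set.countable_of_injective_of_countable_image ((hseq.injOn hn).mono hS₂S) h)
  have hXT : ∀ τ ∈ σ '' S₂, IsTup T n τ := by
    rintro _ ⟨ξ, hξ, rfl⟩
    exact (hseq ξ (hS₂S hξ)).1
  have hA : tDownClosure (σ '' S₂) ∈ Fn T K n := by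
    refine tDownClosure_mem_Fn hAr.1 hXT hX
      (by rintro _ ⟨ξ, hξ, rfl⟩ _ ⟨η, hη, rfl⟩; exact hpat ξ hξ η hη) ?_
    rintro _ ⟨_, ⟨ξ, hξ, rfl⟩, _, ⟨η, hη, rfl⟩, hinc, rfl⟩ hK
    have hξη : ξ ≠ η := by rintro rfl; exact hinc.1 fun i => extends'_refl _
    exact hmeet ⟨ξ, hS₂S hξ, η, hS₂S hη, hξη, hinc, hK⟩
  refine hX ((hB.2 _ hA).mono fun τ hτ => ?_)
  exact ⟨subset_tDownClosure hXT hτ, hσB hτ⟩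

/-- a stationary level sequence inside `K^{[n]}_φ` contains two
members whose meet lies in `K^{[n]}`. -/
theorem stmt10 (T K : Set BNode) (hcoh : Coherent T) (hsp : IsSpecial T)
    (hAr : IsAronszajn T) (hfm : FinModClosed T) (hKT : K ⊆ T)
    (n : ℕ) (C : Set Ordinal) (N : Ordinal → Set (Set (Fin n → BNode)))
    (hW : Phi0Witness T K n C N) (S : Set Ordinal)
    (hS : IsStationary S) (hSC : S ⊆ C)
    (σ : Ordinal → Fin n → BNode) (hseq : LevelSeq T n S σ)
    (hKφ : ∀ ξ ∈ S, σ ξ ∈ KPhi T K n C N) :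
    ∃ ξ ∈ S, ∃ η ∈ S, ξ ≠ η ∧ tIncomp (σ ξ) (σ η) ∧
      KTup T K n (tmeet (σ ξ) (σ η)) :=
  stmt10_general T K hcoh hAr n C N hW S hS hSC σ hseq hKφ

end Basis5
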